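/- Let 0 < m < 1, a > 0, b < 0, g > 0, n = 1, and define U(ξ) = (2a/(g(m+1)))^{1/(1−m)} · cos(√(−g/(4b))·(1−m)·ξ)^{2/(1−m)} for |ξ| ≤ L = π/((1−m)√(g/|b|)). Then on (−L, L), U satisfies −g·U + a·U^m + b·U'' = C for some constant C, and in fact C = 0. -/

import Mathlib

open Set Real

/-!
With `c = √(-g/(4b)) (1 - m)` and `p = 2/(1 - m)`, the profile is `U = A cos(c ξ)^p`, and on
`|c ξ| < π/2` (i.e. `|ξ| < L`) a direct computation gives
`U'' = A c² p ((p - 1) cos^(p-2) - p cos^p)`, while `U^m = A^m cos^(p-2)` because `p m = p - 2`.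
The choice of `c` makes `b c² p² = -g` and `b c² p (p - 1) = -g (1 + m)/2`, and the choice of the
amplitude makes `a A^m = g (1 + m)/2 · A`, so the `cos^p` and `cos^(p-2)` terms cancel separately.
-/

lemma hasDerivAt_cos_mul_rpow {c p : ℝ} (hp : 1 ≤ p) (x : ℝ) :
    HasDerivAt (fun y => cos (c * y) ^ p)
      (-(c * p) * (sin (c * x) * cos (c * x) ^ (p - 1))) x := by
  have hcos : HasDerivAt (fun y => cos (c * y)) (-sin (c * x) * c) x := by
    simpa using ((hasDerivAt_id x).const_mul c).cos
  convert hcos.rpow_const (Or.inr hp) using 1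
  ring

lemma deriv_cos_mul_rpow {c p : ℝ} (hp : 1 ≤ p) :
    deriv (fun y => cos (c * y) ^ p)
      = fun x => -(c * p) * (sin (c * x) * cos (c * x) ^ (p - 1)) :=
  funext fun x => (hasDerivAt_cos_mul_rpow hp x).deriv

lemma deriv_deriv_cos_mul_rpow {c p x : ℝ} (hp : 1 ≤ p) (hx : 0 < cos (c * x)) :
    deriv (deriv fun y => cos (c * y) ^ p) x
      = c ^ 2 * p * ((p - 1) * cos (c * x) ^ (p - 2) - p * cos (c * x) ^ p) := by
  have hlin : HasDerivAt (fun y : ℝ => c * y) c x := by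
    simpa using (hasDerivAt_id x).const_mul c
  have hsin : HasDerivAt (fun y => sin (c * y)) (cos (c * x) * c) x :=
    (hasDerivAt_sin (c * x)).comp x hlin
  have hcos : HasDerivAt (fun y => cos (c * y)) (-sin (c * x) * c) x :=
    (hasDerivAt_cos (c * x)).comp x hlin
  have hsq := sin_sq_add_cos_sq (c * x)
  have hpow1 : cos (c * x) ^ (p - 1) = cos (c * x) ^ (p - 2) * cos (c * x) := by
    rw [← rpow_add_one hx.ne', show p - 2 + 1 = p - 1 by ring]
  have hpow : cos (c * x) ^ p = cos (c * x) ^ (p - 2) * cos (c * x) ^ 2 := by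
    rw [← rpow_natCast, ← rpow_add hx]; norm_num
  have hd : HasDerivAt (fun y => -(c * p) * (sin (c * y) * cos (c * y) ^ (p - 1)))
      (-(c * p) * (cos (c * x) * c * cos (c * x) ^ (p - 1)
        + sin (c * x) * (-sin (c * x) * c * (p - 1) * cos (c * x) ^ (p - 1 - 1)))) x :=
    (hsin.mul (hcos.rpow_const (Or.inl hx.ne'))).const_mul (-(c * p))
  rw [deriv_cos_mul_rpow hp, hd.deriv, show p - 1 - 1 = p - 2 by ring, hpow1, hpow]
  linear_combination (c ^ 2 * p * (p - 1) * cos (c * x) ^ (p - 2)) * hsq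

lemma sqrt_div_abs_eq_two_mul_sqrt {b : ℝ} (hb : b ≤ 0) (g : ℝ) :
    √(g / |b|) = 2 * √(-g / (4 * b)) := by
  rw [abs_of_nonpos hb, show g / -b = 2 ^ 2 * (-g / (4 * b)) by field_simp; ring,
    sqrt_mul (by norm_num), sqrt_sq (by norm_num)]

lemma cos_mul_pos_of_mem_Ioo {c L ξ : ℝ} (hc : 0 < c) (hcL : c * L = π / 2)
    (hξ : ξ ∈ Ioo (-L) L) : 0 < cos (c * ξ) := by
  apply cos_pos_of_mem_Ioo
  rw [← hcL, ← mul_neg]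
  exact ⟨mul_lt_mul_of_pos_left hξ.1 hc, mul_lt_mul_of_pos_left hξ.2 hc⟩

lemma mul_rpow_eq_of_rpow_one_div_one_sub {k d m : ℝ} (hkd : 0 ≤ k / d) (hd : d ≠ 0)
    (hm : m ≠ 1) :
    k * ((k / d) ^ (1 / (1 - m))) ^ m = d * (k / d) ^ (1 / (1 - m)) := by
  have h1m : 1 - m ≠ 0 := sub_ne_zero.mpr hm.symm
  set A := (k / d) ^ (1 / (1 - m))
  have hA : A ^ (1 - m) = k / d := by
    simp only [A, one_div]
    exact rpow_inv_rpow hkd h1m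
  calc k * A ^ m = d * (A ^ m * A ^ (1 - m)) := by
        rw [hA]; field_simp
    _ = d * A := by rw [← rpow_add' (rpow_nonneg hkd _) (by simp), add_sub_cancel, rpow_one]

lemma travelling_wave_residual_eq_zero_of_cos_rpow {m a b g A c p ξ : ℝ} {U : ℝ → ℝ}
    (hp : 1 ≤ p) (hpm : p * (1 - m) = 2) (hA : 0 ≤ A) (hU : ∀ x, U x = A * cos (c * x) ^ p)
    (hbc : 4 * b * c ^ 2 = -g * (1 - m) ^ 2) (hamp : 2 * a * A ^ m = g * (m + 1) * A)
    (hξ : 0 < cos (c * ξ)) :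
    -g * U ξ + a * U ξ ^ m + b * deriv (deriv U) ξ = 0 := by
  have hUm : U ξ ^ m = A ^ m * cos (c * ξ) ^ (p - 2) := by
    rw [hU, mul_rpow hA (rpow_nonneg hξ.le _), ← rpow_mul hξ.le,
      show p * m = p - 2 by linear_combination -hpm]
  have hU'' : deriv (deriv U) ξ
      = A * (c ^ 2 * p * ((p - 1) * cos (c * ξ) ^ (p - 2) - p * cos (c * ξ) ^ p)) := by
    rw [show U = fun x => A * cos (c * x) ^ p from funext hU, deriv_const_mul_field',
      deriv_const_mul_field']
    exact congrArg (A * ·) (deriv_deriv_cos_mul_rpow hp hξ)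
  have hsq : p ^ 2 * (b * c ^ 2) = -g := by
    linear_combination (p ^ 2 / 4) * hbc - g / 4 * (p * (1 - m) + 2) * hpm
  have hlin : p * (b * c ^ 2) = -g * (1 - m) / 2 := by
    linear_combination (p / 4) * hbc - g * (1 - m) / 4 * hpm
  rw [hUm, hU'', hU]
  linear_combination (cos (c * ξ) ^ (p - 2) / 2) * hamp
    + A * (cos (c * ξ) ^ (p - 2) - cos (c * ξ) ^ p) * hsq - A * cos (c * ξ) ^ (p - 2) * hlin

theorem stmt_6 (m a b g : ℝ) (hm0 : 0 < m) (hm1 : m < 1)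
    (ha : 0 < a) (hb : b < 0) (hg : 0 < g)
    (U : ℝ → ℝ)
    (hU : ∀ ξ : ℝ, U ξ = (2 * a / (g * (m + 1))) ^ (1 / (1 - m)) *
        Real.cos (Real.sqrt (-g / (4 * b)) * (1 - m) * ξ) ^ (2 / (1 - m)))
    (L : ℝ) (hL : L = π / ((1 - m) * Real.sqrt (g / |b|))) :
    ∃ C : ℝ, (∀ ξ ∈ Ioo (-L) L,
        -g * U ξ + a * U ξ ^ m + b * deriv (deriv U) ξ = C) ∧ C = 0 := by
  have h1m : 0 < 1 - m := by linarith
  have hκ : 0 < -g / (4 * b) := div_pos_of_neg_of_neg (by linarith) (by linarith)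
  have hc : 0 < √(-g / (4 * b)) * (1 - m) := mul_pos (sqrt_pos.mpr hκ) h1m
  have hcL : √(-g / (4 * b)) * (1 - m) * L = π / 2 := by
    have hK : √(-g / (4 * b)) ≠ 0 := (sqrt_pos.mpr hκ).ne'
    rw [hL, sqrt_div_abs_eq_two_mul_sqrt hb.le]
    generalize √(-g / (4 * b)) = K at hK ⊢
    field_simp
  have hX : 0 < 2 * a / (g * (m + 1)) := by positivity
  refine ⟨0, fun ξ hξ => travelling_wave_residual_eq_zero_of_cos_rpow ?_ ?_
    (rpow_nonneg hX.le _) hU ?_ ?_ (cos_mul_pos_of_mem_Ioo hc hcL hξ), rfl⟩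
  · rw [le_div_iff₀ h1m]
    linarith
  · field_simp
  · rw [mul_pow, sq_sqrt hκ.le]
    field_simp [hb.ne]
  · exact mul_rpow_eq_of_rpow_one_div_one_sub hX.le (by positivity) hm1.ne
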